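/- arXiv:2601.09987 — 10 statements merged into one kernel-verified Lean document; each statement's English description precedes it below -/
import Mathlib

section
/- Let m ≤ min(m_L, m_R) and let f : {0,1}^{m_L} → {0,1}^{m_R} satisfy: f(0) = 0; f of the bit-string whose first m entries are 1 and whose remaining entries are 0 equals the bit-string in {0,1}^{m_R} whose first m entries are 1 and whose remaining entries are 0; and the contraction property |x − x'| ≥ |f(x) − f(x')| (Hamming distance) for all x,x' ∈ {0,1}^{m_L}. Then for every x' ∈ {0,1}^m, f((x',0)) = (y',0) for some y' ∈ {0,1}^m with |y'| = |x'|, where (x',0) denotes x' padded with zeros to length m_L and (y',0) denotes y' padded with zeros to length m_R. -/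
open Finset

private lemma filter_lt_map {m N : ℕ} (h : m ≤ N) (p : Fin N → Prop) [DecidablePred p] :
    univ.filter (fun n : Fin N => (n : ℕ) < m ∧ p n) =
      (univ.filter fun k : Fin m => p (Fin.castLE h k)).map (Fin.castLEEmb h) := by
  ext n
  simp only [mem_filter, mem_univ, true_and, mem_map, Fin.castLEEmb_apply]
  constructor
  · rintro ⟨hn, hp⟩
    exact ⟨⟨n, hn⟩, hp, rfl⟩
  · rintro ⟨k, hk, rfl⟩
    exact ⟨k.2, hk⟩

/-- a contraction map fixing the all-zeros string and the
"first `m` ones" string maps zero-padded strings to zero-padded strings of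
the same weight. -/
theorem stmt_2 {m mL mR : ℕ} (hm : m ≤ min mL mR)
    (f : (Fin mL → Bool) → Fin mR → Bool)
    (h0 : f (fun _ => false) = fun _ => false)
    (h1 : f (fun n : Fin mL => decide ((n : ℕ) < m)) = fun n : Fin mR => decide ((n : ℕ) < m))
    (hcontr : ∀ x x' : Fin mL → Bool, hammingDist (f x) (f x') ≤ hammingDist x x') :
    ∀ x' : Fin m → Bool, ∃ y' : Fin m → Bool,
      f (fun n : Fin mL => if h : (n : ℕ) < m then x' ⟨(n : ℕ), h⟩ else false) =
        (fun n : Fin mR => if h : (n : ℕ) < m then y' ⟨(n : ℕ), h⟩ else false) ∧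
      (Finset.univ.filter fun n => y' n = true).card =
        (Finset.univ.filter fun n => x' n = true).card := by
  have hmL : m ≤ mL := hm.trans (min_le_left _ _)
  have hmR : m ≤ mR := hm.trans (min_le_right _ _)
  intro x'
  set X : Fin mL → Bool := fun n => if h : (n : ℕ) < m then x' ⟨(n : ℕ), h⟩ else false with hXdef
  set w := (univ.filter fun k => x' k = true).card with hw
  have hwm : w ≤ m := by
    calc w ≤ (univ : Finset (Fin m)).card := card_filter_le _ _
    _ = m := by simp
  have hXval : ∀ k : Fin m, X (Fin.castLE hmL k) = x' k := by
    intro k; simp [hXdef, k.2]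
  -- distance from X to zero
  have hd0 : hammingDist X (fun _ => false) = w := by
    have e1 : (univ.filter fun n : Fin mL => X n ≠ false) =
        univ.filter (fun n : Fin mL => (n : ℕ) < m ∧ X n = true) := by
      ext n
      simp only [mem_filter, mem_univ, true_and, ne_eq, Bool.not_eq_false]
      constructor
      · intro h
        refine ⟨?_, h⟩
        by_contra hn
        simp [hXdef, hn] at h
      · exact fun h => h.2
    show (univ.filter fun n : Fin mL => X n ≠ false).card = w
    rw [e1, filter_lt_map hmL (fun n => X n = true), card_map, hw]
    apply congrArg
    apply filter_congr
    intro k _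
    simp [hXval k]
  -- distance from X to ones
  have hd1 : hammingDist X (fun n : Fin mL => decide ((n : ℕ) < m)) = m - w := by
    have e1 : (univ.filter fun n : Fin mL => X n ≠ decide ((n : ℕ) < m)) =
        univ.filter (fun n : Fin mL => (n : ℕ) < m ∧ X n = false) := by
      ext n
      simp only [mem_filter, mem_univ, true_and, ne_eq]
      by_cases hn : (n : ℕ) < m
      · simp [hn, Bool.not_eq_true]
      · simp [hn, hXdef]
    show (univ.filter fun n : Fin mL => X n ≠ decide ((n : ℕ) < m)).card = m - w
    rw [e1, filter_lt_map hmL (fun n => X n = false), card_map]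
    have : (univ.filter fun k : Fin m => X (Fin.castLE hmL k) = false) =
        univ.filter fun k : Fin m => ¬ x' k = true := by
      apply filter_congr
      intro k _
      simp [hXval k]
    rw [this]
    have := card_filter_add_card_filter_not (s := (univ : Finset (Fin m)))
      (p := fun k => x' k = true)
    simp only [card_univ, Fintype.card_fin] at this
    omega
  set Y := f X with hYdef
  -- bounds
  have hb0 : (univ.filter fun n : Fin mR => Y n ≠ false).card ≤ w := by
    have := hcontr X (fun _ => false)
    rw [h0, hd0] at this
    exact this
  have hb1 : (univ.filter fun n : Fin mR => Y n ≠ decide ((n : ℕ) < m)).card ≤ m - w := by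
    have := hcontr X (fun n : Fin mL => decide ((n : ℕ) < m))
    rw [h1, hd1] at this
    exact this
  -- split the two filters
  set A := univ.filter (fun n : Fin mR => (n : ℕ) < m ∧ Y n = true) with hA
  set B := univ.filter (fun n : Fin mR => ¬ (n : ℕ) < m ∧ Y n = true) with hB
  set C := univ.filter (fun n : Fin mR => (n : ℕ) < m ∧ Y n = false) with hC
  have hT : A.card + B.card ≤ w := by
    refine le_trans (le_of_eq ?_) hb0
    have := card_filter_add_card_filter_not
      (s := univ.filter fun n : Fin mR => Y n ≠ false) (p := fun n : Fin mR => (n : ℕ) < m)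
    have eA : (univ.filter fun n : Fin mR => Y n ≠ false).filter
        (fun n : Fin mR => (n : ℕ) < m) = A := by
      ext n; rw [hA]
      simp only [filter_filter, mem_filter, mem_univ, true_and, ne_eq, Bool.not_eq_false]
      tauto
    have eB : (univ.filter fun n : Fin mR => Y n ≠ false).filter
        (fun n : Fin mR => ¬ (n : ℕ) < m) = B := by
      ext n; rw [hB]
      simp only [filter_filter, mem_filter, mem_univ, true_and, ne_eq, Bool.not_eq_false]
      tauto
    rw [eA, eB] at this
    exact this
  have hD : C.card + B.card ≤ m - w := by
    refine le_trans (le_of_eq ?_) hb1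
    have := card_filter_add_card_filter_not
      (s := univ.filter fun n : Fin mR => Y n ≠ decide ((n : ℕ) < m))
      (p := fun n : Fin mR => (n : ℕ) < m)
    have eC : (univ.filter fun n : Fin mR => Y n ≠ decide ((n : ℕ) < m)).filter
        (fun n : Fin mR => (n : ℕ) < m) = C := by
      ext n; rw [hC]
      simp only [filter_filter, mem_filter, mem_univ, true_and, ne_eq]
      by_cases hn : (n : ℕ) < m <;> simp [hn, Bool.not_eq_true]
    have eB : (univ.filter fun n : Fin mR => Y n ≠ decide ((n : ℕ) < m)).filter
        (fun n : Fin mR => ¬ (n : ℕ) < m) = B := by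
      ext n; rw [hB]
      simp only [filter_filter, mem_filter, mem_univ, true_and, ne_eq]
      by_cases hn : (n : ℕ) < m <;> simp [hn, Bool.not_eq_false]
    rw [eC, eB] at this
    exact this
  have hAC : A.card + C.card = m := by
    have := card_filter_add_card_filter_not
      (s := univ.filter fun n : Fin mR => (n : ℕ) < m) (p := fun n : Fin mR => Y n = true)
    have eA : (univ.filter fun n : Fin mR => (n : ℕ) < m).filter (fun n => Y n = true) = A := by
      ext n; rw [hA]
      simp only [filter_filter, mem_filter, mem_univ, true_and]
    have eC : (univ.filter fun n : Fin mR => (n : ℕ) < m).filter (fun n => ¬ Y n = true) = C := by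
      ext n; rw [hC]
      simp only [filter_filter, mem_filter, mem_univ, true_and, Bool.not_eq_true]
    have e3 : (univ.filter fun n : Fin mR => (n : ℕ) < m).card = m := by
      have e4 : (univ.filter fun n : Fin mR => (n : ℕ) < m) =
          univ.filter (fun n : Fin mR => (n : ℕ) < m ∧ True) := by simp
      rw [e4, filter_lt_map hmR (fun _ => True), card_map]
      simp
    rw [eA, eC, e3] at this
    exact this
  have hBzero : B.card = 0 := by omega
  have hAw : A.card = w := by omega
  have hBfalse : ∀ n : Fin mR, ¬ (n : ℕ) < m → Y n = false := by
    intro n hn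
    by_contra h
    have : n ∈ B := by
      rw [hB]; simp only [mem_filter, mem_univ, true_and]
      exact ⟨hn, by simpa using h⟩
    rw [card_eq_zero] at hBzero
    simp [hBzero] at this
  refine ⟨fun k => Y (Fin.castLE hmR k), ?_, ?_⟩
  · funext n
    show Y n = _
    by_cases hn : (n : ℕ) < m
    · simp only [hn, dif_pos]
      rfl
    · simp only [hn, dif_neg, not_false_iff]
      exact hBfalse n hn
  · rw [← hAw, hA, filter_lt_map hmR (fun n => Y n = true), card_map]
end

section
/- Let (L,R) be a pair of (0,1)-matrices with N+1 rows that is centered on some party (so both have the same number m of columns) and has a zero row common to L and R. Then every inclusion dominance map for (L,R) is a contraction map for (L,R). -/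
/-- The number of 1-entries of a bit-string. -/
def bitWeight {m : ℕ} (u : Fin m → Bool) : ℕ :=
  (Finset.univ.filter fun n => u n = true).card

/-- A pair of (0,1)-matrices with `N+1` rows and `m` columns is balanced if
corresponding rows have equal sums. -/
def IsBalanced {N m : ℕ} (L R : Fin (N + 1) → Fin m → Bool) : Prop :=
  ∀ i, bitWeight (L i) = bitWeight (R i)

/-- A pair is centered on `i` if it is balanced and row `i` of both matrices is all 1s. -/
def IsCenteredOn {N m : ℕ} (L R : Fin (N + 1) → Fin m → Bool) (i : Fin (N + 1)) : Prop :=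
  IsBalanced L R ∧ (∀ n, L i n = true) ∧ (∀ n, R i n = true)

/-- A dominance map: weight-preserving, and `L uᵀ ≤ R (f u)ᵀ` componentwise. -/
def IsDominanceMap {N m : ℕ} (L R : Fin (N + 1) → Fin m → Bool)
    (f : (Fin m → Bool) → Fin m → Bool) : Prop :=
  (∀ u, bitWeight (f u) = bitWeight u) ∧
  (∀ (u : Fin m → Bool) (i : Fin (N + 1)),
    (Finset.univ.filter fun n => u n = true ∧ L i n = true).card ≤
    (Finset.univ.filter fun n => f u n = true ∧ R i n = true).card)

/-- An inclusion dominance map: a dominance map which preserves componentwise inclusion. -/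
def IsInclusionDominanceMap {N m : ℕ} (L R : Fin (N + 1) → Fin m → Bool)
    (f : (Fin m → Bool) → Fin m → Bool) : Prop :=
  IsDominanceMap L R f ∧
  ∀ u u' : Fin m → Bool, (∀ n, u' n = true → u n = true) →
    ∀ n, f u' n = true → f u n = true

/-- A contraction map: sends rows of `L` to rows of `R` and is 1-Lipschitz for
the Hamming distance. -/
def IsContractionMap {N m : ℕ} (L R : Fin (N + 1) → Fin m → Bool)
    (f : (Fin m → Bool) → Fin m → Bool) : Prop :=
  (∀ i, f (L i) = R i) ∧
  ∀ x x' : Fin m → Bool, hammingDist (f x) (f x') ≤ hammingDist x x'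

section Aux

lemma ham_add_of_le {m : ℕ} {u u' : Fin m → Bool} (h : ∀ n, u' n = true → u n = true) :
    hammingDist u u' + bitWeight u' = bitWeight u := by
  rw [hammingDist, bitWeight, bitWeight, ← Finset.card_union_of_disjoint]
  · congr 1
    ext n
    simp only [Finset.mem_union, Finset.mem_filter, Finset.mem_univ, true_and, ne_eq]
    cases hu : u n <;> cases hu' : u' n <;> simp_all
  · rw [Finset.disjoint_filter]
    intro n _ hn hn'
    exact hn ((h n hn').trans hn'.symm)

lemma meet_split {m : ℕ} (x x' : Fin m → Bool) :
    hammingDist x (fun n => x n && x' n) +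
      hammingDist (fun n => x n && x' n) x' = hammingDist x x' := by
  have hdis : Disjoint
      (Finset.univ.filter fun n => x n ≠ (x n && x' n))
      (Finset.univ.filter fun n => (x n && x' n) ≠ x' n) := by
    rw [Finset.disjoint_filter]
    intro n _ hn hn'
    cases hx : x n <;> cases hx' : x' n <;> simp_all
  rw [hammingDist, hammingDist, hammingDist, ← Finset.card_union_of_disjoint hdis]
  congr 1
  ext n
  simp only [Finset.mem_union, Finset.mem_filter, Finset.mem_univ, true_and, ne_eq]
  cases hx : x n <;> cases hx' : x' n <;> simp

end Aux

/-- for a centered pair with a common zero row, every inclusion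
dominance map is a contraction map. -/
theorem stmt_3 {N m : ℕ} (L R : Fin (N + 1) → Fin m → Bool)
    (hcen : ∃ i, IsCenteredOn L R i)
    (hpur : ∃ p : Fin (N + 1), (∀ n, L p n = false) ∧ (∀ n, R p n = false))
    (f : (Fin m → Bool) → Fin m → Bool)
    (hf : IsInclusionDominanceMap L R f) :
    IsContractionMap L R f := by
  obtain ⟨⟨hw, hdom⟩, hmono⟩ := hf
  obtain ⟨i0, hbal, -, -⟩ := hcen
  constructor
  · -- f (L i) = R i
    intro i
    have h1 : (Finset.univ.filter fun n => L i n = true ∧ L i n = true).card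
        = bitWeight (L i) := by
      rw [bitWeight]; congr 1; ext n; simp [and_self]
    have h2 := hdom (L i) i
    rw [h1] at h2
    set S := Finset.univ.filter fun n => f (L i) n = true ∧ R i n = true with hS
    have hS1 : S ⊆ Finset.univ.filter fun n => f (L i) n = true := by
      intro n hn; simp only [hS, Finset.mem_filter] at *; exact ⟨hn.1, hn.2.1⟩
    have hS2 : S ⊆ Finset.univ.filter fun n => R i n = true := by
      intro n hn; simp only [hS, Finset.mem_filter] at *; exact ⟨hn.1, hn.2.2⟩
    have hc1 : (Finset.univ.filter fun n => f (L i) n = true).card = bitWeight (L i) := by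
      rw [← bitWeight, hw]
    have hc2 : (Finset.univ.filter fun n => R i n = true).card = bitWeight (L i) := by
      rw [← bitWeight, ← hbal i]
    have e1 : (Finset.univ.filter fun n => f (L i) n = true) = S :=
      (Finset.eq_of_subset_of_card_le hS1 (by rw [hc1]; exact h2)).symm
    have e2 : (Finset.univ.filter fun n => R i n = true) = S :=
      (Finset.eq_of_subset_of_card_le hS2 (by rw [hc2]; exact h2)).symm
    have key : ∀ n, f (L i) n = true ↔ R i n = true := by
      intro n
      have := Finset.ext_iff.mp (e1.trans e2.symm) n
      simpa using this
    funext n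
    cases hfn : f (L i) n <;> cases hrn : R i n
    · rfl
    · exact absurd ((key n).mpr hrn) (by simp [hfn])
    · exact absurd ((key n).mp hfn) (by simp [hrn])
    · rfl
  · -- Lipschitz
    intro x x'
    set y : Fin m → Bool := fun n => x n && x' n with hy
    have hyx : ∀ n, y n = true → x n = true := by
      intro n hn; simp only [hy, Bool.and_eq_true] at hn; exact hn.1
    have hyx' : ∀ n, y n = true → x' n = true := by
      intro n hn; simp only [hy, Bool.and_eq_true] at hn; exact hn.2
    have hfx : ∀ n, f y n = true → f x n = true := hmono x y hyx
    have hfx' : ∀ n, f y n = true → f x' n = true := hmono x' y hyx'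
    have dA : hammingDist (f x) (f y) = hammingDist x y := by
      have hA := ham_add_of_le hfx
      have hB := ham_add_of_le hyx
      rw [hw, hw] at hA
      omega
    have dB : hammingDist (f y) (f x') = hammingDist y x' := by
      have hA := ham_add_of_le hfx'
      have hB := ham_add_of_le hyx'
      rw [hw, hw] at hA
      rw [hammingDist_comm, hammingDist_comm y x']
      omega
    calc hammingDist (f x) (f x')
        ≤ hammingDist (f x) (f y) + hammingDist (f y) (f x') :=
          hammingDist_triangle _ _ _
      _ = hammingDist x y + hammingDist y x' := by rw [dA, dB]
      _ = hammingDist x x' := meet_split x x'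
end

section
/- Let (L,R) be a pair of (0,1)-matrices with N+1 rows that is centered on some party (so both have the same number m of columns) and has a zero row common to L and R. Then every contraction map for (L,R) is an inclusion dominance map for (L,R). -/
open Finset in

lemma key_eq {m : ℕ} (x y : Fin m → Bool) :
    2 * (univ.filter fun n => x n = true ∧ y n = true).card + hammingDist x y
      = bitWeight x + bitWeight y := by
  unfold bitWeight
  rw [hammingDist, Finset.card_filter, Finset.card_filter, Finset.card_filter,
    Finset.card_filter, Finset.mul_sum, ← Finset.sum_add_distrib, ← Finset.sum_add_distrib]
  apply Finset.sum_congr rfl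
  intro n _
  cases x n <;> cases y n <;> simp

lemma ham_zero {m : ℕ} (x : Fin m → Bool) :
    hammingDist x (fun _ => false) = bitWeight x := by
  unfold bitWeight
  rw [hammingDist]
  congr 1
  apply Finset.filter_congr
  intro n _
  cases x n <;> simp

lemma ham_ones {m : ℕ} (x : Fin m → Bool) :
    hammingDist x (fun _ => true) + bitWeight x = m := by
  unfold bitWeight
  rw [hammingDist, Finset.card_filter, Finset.card_filter, ← Finset.sum_add_distrib]
  have : ∀ n ∈ Finset.univ, ((if x n ≠ true then 1 else 0) + if x n = true then 1 else 0) = 1 := by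
    intro n _; cases x n <;> simp
  rw [Finset.sum_congr rfl this, Finset.sum_const, Finset.card_univ]
  simp

lemma wt_le {m : ℕ} (x : Fin m → Bool) : bitWeight x ≤ m := by
  unfold bitWeight
  calc _ ≤ Finset.univ.card := Finset.card_filter_le _ _
  _ = m := by simp

lemma ham_incl {m : ℕ} (u u' : Fin m → Bool) (h : ∀ n, u' n = true → u n = true) :
    hammingDist u u' + bitWeight u' = bitWeight u := by
  unfold bitWeight
  rw [hammingDist, Finset.card_filter, Finset.card_filter, Finset.card_filter,
    ← Finset.sum_add_distrib]
  apply Finset.sum_congr rfl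
  intro n _
  have := h n
  cases hu : u n <;> cases hu' : u' n <;> simp_all

/-- for a centered pair with a common zero row, every contraction
map is an inclusion dominance map. -/
theorem stmt_4 {N m : ℕ} (L R : Fin (N + 1) → Fin m → Bool)
    (hcen : ∃ i, IsCenteredOn L R i)
    (hpur : ∃ p : Fin (N + 1), (∀ n, L p n = false) ∧ (∀ n, R p n = false))
    (f : (Fin m → Bool) → Fin m → Bool)
    (hf : IsContractionMap L R f) :
    IsInclusionDominanceMap L R f := by
  obtain ⟨i0, hbal, hL1, hR1⟩ := hcen
  obtain ⟨p, hLp, hRp⟩ := hpur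
  obtain ⟨hrows, hlip⟩ := hf
  have hLp' : L p = fun _ => false := funext hLp
  have hRp' : R p = fun _ => false := funext hRp
  have hL1' : L i0 = fun _ => true := funext hL1
  have hR1' : R i0 = fun _ => true := funext hR1
  -- weight preservation
  have hw : ∀ u, bitWeight (f u) = bitWeight u := by
    intro u
    have h1 : hammingDist (f u) (f (L p)) ≤ hammingDist u (L p) := hlip u (L p)
    rw [hrows p, hRp', hLp', ham_zero, ham_zero] at h1
    have h2 : hammingDist (f u) (f (L i0)) ≤ hammingDist u (L i0) := hlip u (L i0)
    rw [hrows i0, hR1', hL1'] at h2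
    have h3 := ham_ones (f u)
    have h4 := ham_ones u
    have h5 := wt_le (f u)
    have h6 := wt_le u
    omega
  refine ⟨⟨hw, ?_⟩, ?_⟩
  · intro u i
    have hk1 := key_eq u (L i)
    have hk2 := key_eq (f u) (R i)
    have hlie : hammingDist (f u) (R i) ≤ hammingDist u (L i) := by
      rw [← hrows i]; exact hlip u (L i)
    have := hbal i
    have := hw u
    omega
  · intro u u' h n hn
    have hincl := ham_incl u u' h
    have hk := key_eq (f u') (f u)
    have hlie : hammingDist (f u') (f u) ≤ bitWeight u - bitWeight u' := by
      rw [hammingDist_comm]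
      have := hlip u u'
      omega
    have hwu := hw u
    have hwu' := hw u'
    have hle : bitWeight (f u') ≤
        (Finset.univ.filter fun n => f u' n = true ∧ f u n = true).card := by
      have hbw' : bitWeight u' ≤ bitWeight u := by
        have := ham_incl u u' h; omega
      omega
    have heq : (Finset.univ.filter fun n => f u' n = true ∧ f u n = true) =
        (Finset.univ.filter fun n => f u' n = true) := by
      apply Finset.eq_of_subset_of_card_le
      · intro k hk
        simp only [Finset.mem_filter] at hk ⊢
        exact ⟨hk.1, hk.2.1⟩
      · exact hle
    have hmem : n ∈ Finset.univ.filter fun k => f u' k = true := by simp [hn]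
    rw [← heq] at hmem
    simp only [Finset.mem_filter] at hmem
    exact hmem.2.2
end

section
/- Let (L,R) be a pair of (0,1)-matrices with N+1 rows that is centered on some party and has a zero row common to L and R. Then every contraction map for (L,R) is a dominance map for (L,R); in particular, if (L,R) admits a contraction map then (L,R) admits a dominance map. -/
lemma ham_false {m : ℕ} (x : Fin m → Bool) :
    hammingDist x (fun _ => false) = (Finset.univ.filter fun n => x n = true).card := by
  unfold hammingDist
  congr 1
  ext n
  simp

lemma ham_true {m : ℕ} (x : Fin m → Bool) :
    hammingDist x (fun _ => true) + (Finset.univ.filter fun n => x n = true).card = m := by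
  unfold hammingDist
  have h1 : (Finset.univ.filter fun n => x n ≠ (fun _ => true) n)
      = Finset.univ.filter fun n => ¬ (x n = true) := by
    apply Finset.filter_congr; intro n _; simp
  rw [h1, Finset.filter_not, Finset.card_sdiff_of_subset (Finset.filter_subset _ _)]
  have := Finset.card_filter_le (Finset.univ : Finset (Fin m)) (fun n => x n = true)
  simp at this ⊢
  omega

lemma key {m : ℕ} (x y : Fin m → Bool) :
    2 * (Finset.univ.filter fun n => x n = true ∧ y n = true).card + hammingDist x y
    = (Finset.univ.filter fun n => x n = true).card
      + (Finset.univ.filter fun n => y n = true).card := by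
  unfold hammingDist
  rw [Finset.card_filter, Finset.card_filter, Finset.card_filter, Finset.card_filter,
    Finset.mul_sum, ← Finset.sum_add_distrib, ← Finset.sum_add_distrib]
  apply Finset.sum_congr rfl
  intro n _
  cases hx : x n <;> cases hy : y n <;> simp [hx, hy]

/-- for a centered pair with a common zero row, every contraction
map is a dominance map; in particular, existence of a contraction map implies
existence of a dominance map. -/
theorem stmt_5 {N m : ℕ} (L R : Fin (N + 1) → Fin m → Bool)
    (hcen : ∃ i, IsCenteredOn L R i)
    (hpur : ∃ p : Fin (N + 1), (∀ n, L p n = false) ∧ (∀ n, R p n = false)) :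
    (∀ f : (Fin m → Bool) → Fin m → Bool,
      IsContractionMap L R f → IsDominanceMap L R f) ∧
    ((∃ f : (Fin m → Bool) → Fin m → Bool, IsContractionMap L R f) →
      ∃ f : (Fin m → Bool) → Fin m → Bool, IsDominanceMap L R f) := by
  obtain ⟨i0, hbal, hLi0, hRi0⟩ := hcen
  obtain ⟨p, hLp, hRp⟩ := hpur
  have main : ∀ f, IsContractionMap L R f → IsDominanceMap L R f := by
    rintro f ⟨hrow, hlip⟩
    have hLpE : L p = fun _ => false := funext hLp
    have hRpE : R p = fun _ => false := funext hRp
    have hLi0E : L i0 = fun _ => true := funext hLi0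
    have hRi0E : R i0 = fun _ => true := funext hRi0
    have hw : ∀ u, bitWeight (f u) = bitWeight u := by
      intro u
      have h1 : hammingDist (f u) (f (L p)) ≤ hammingDist u (L p) := hlip u (L p)
      rw [hrow p, hRpE, hLpE, ham_false, ham_false] at h1
      have h2 : hammingDist (f u) (f (L i0)) ≤ hammingDist u (L i0) := hlip u (L i0)
      rw [hrow i0, hRi0E, hLi0E] at h2
      have h3 := ham_true (f u)
      have h4 := ham_true u
      unfold bitWeight
      omega
    refine ⟨hw, fun u i => ?_⟩
    have hk1 := key u (L i)
    have hk2 := key (f u) (R i)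
    have hd : hammingDist (f u) (R i) ≤ hammingDist u (L i) := by
      have := hlip u (L i); rwa [hrow i] at this
    have hwu := hw u
    have hwi := hbal i
    unfold bitWeight at hwu hwi
    omega
  exact ⟨main, fun ⟨f, hf⟩ => ⟨f, main f hf⟩⟩
end

section
/- Let L and R be (0,1)-matrices of the same size r × m that are balanced (each row of L has the same sum as the corresponding row of R) and suppose there exists a dominance map for (L,R). Then L is positive-combinations majorized by R: for every row vector v ∈ ℝ^r with nonnegative entries, the vector vL is majorized by the vector vR. -/
/-- `x` is majorized by `y`: for every `k`, the sum of the `k` largest entries of `x`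
is at most the sum of the `k` largest entries of `y` (expressed as: every `k`-element
partial sum of `x` is dominated by some `k`-element partial sum of `y`), and the total
sums agree. -/
def MajorizedBy {d : ℕ} (x y : Fin d → ℝ) : Prop :=
  (∀ s : Finset (Fin d), ∃ t : Finset (Fin d), t.card = s.card ∧
    ∑ i ∈ s, x i ≤ ∑ i ∈ t, y i) ∧
  ∑ i, x i = ∑ i, y i

/-- a balanced pair of (0,1)-matrices admitting a dominance map is
positive-combinations majorized. -/
theorem stmt_6 {r m : ℕ} (L R : Fin r → Fin m → ℝ)
    (hL01 : ∀ i n, L i n = 0 ∨ L i n = 1)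
    (hR01 : ∀ i n, R i n = 0 ∨ R i n = 1)
    (hbal : ∀ i, ∑ n, L i n = ∑ n, R i n)
    (f : (Fin m → Bool) → Fin m → Bool)
    (hcard : ∀ u : Fin m → Bool,
      (Finset.univ.filter fun n => f u n = true).card =
      (Finset.univ.filter fun n => u n = true).card)
    (hdom : ∀ (u : Fin m → Bool) (i : Fin r),
      ∑ n ∈ Finset.univ.filter (fun n => u n = true), L i n ≤
      ∑ n ∈ Finset.univ.filter (fun n => f u n = true), R i n) :
    ∀ v : Fin r → ℝ, (∀ i, 0 ≤ v i) →
      MajorizedBy (fun n => ∑ i, v i * L i n) (fun n => ∑ i, v i * R i n) := by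
  intro v hv
  constructor
  · intro s
    set u : Fin m → Bool := fun n => decide (n ∈ s) with hu
    have hfs : Finset.univ.filter (fun n => u n = true) = s := by
      ext n; simp [hu]
    refine ⟨Finset.univ.filter fun n => f u n = true, ?_, ?_⟩
    · rw [hcard, hfs]
    · rw [Finset.sum_comm, Finset.sum_comm (s := Finset.univ.filter fun n => f u n = true)]
      apply Finset.sum_le_sum
      intro i _
      rw [← Finset.mul_sum, ← Finset.mul_sum]
      have := hdom u i
      rw [hfs] at this
      exact mul_le_mul_of_nonneg_left this (hv i)
  · rw [Finset.sum_comm, Finset.sum_comm (s := (Finset.univ : Finset (Fin m)))]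
    apply Finset.sum_congr rfl
    intro i _
    rw [← Finset.mul_sum, ← Finset.mul_sum, hbal i]
end

section
/- Let L and R be (0,1)-matrices of the same size r × m such that L is binary-combinations majorized by R, i.e. vL is majorized by vR for every v ∈ {0,1}^r. Then (L,R) is balanced (each row of L has the same sum as the corresponding row of R) and (L,R) obeys region dominance: for every subset X ⊆ {1,...,r}, the number of columns of L having a 1 in every row i ∈ X is at most the number of columns of R having a 1 in every row i ∈ X. -/
/-- binary-combinations majorization implies balance and region dominance. -/
theorem stmt_7 {r m : ℕ} (L R : Fin r → Fin m → ℝ)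
    (hL01 : ∀ i n, L i n = 0 ∨ L i n = 1)
    (hR01 : ∀ i n, R i n = 0 ∨ R i n = 1)
    (hbcm : ∀ v : Fin r → ℝ, (∀ i, v i = 0 ∨ v i = 1) →
      MajorizedBy (fun n => ∑ i, v i * L i n) (fun n => ∑ i, v i * R i n)) :
    (∀ i, ∑ n, L i n = ∑ n, R i n) ∧
    (∀ X : Finset (Fin r),
      (Finset.univ.filter fun n => ∀ i ∈ X, L i n = 1).card ≤
      (Finset.univ.filter fun n => ∀ i ∈ X, R i n = 1).card) := by
  -- for any subset X, the indicator vector gives majorization of row sums over X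
  have key : ∀ X : Finset (Fin r),
      MajorizedBy (fun n => ∑ i ∈ X, L i n) (fun n => ∑ i ∈ X, R i n) := by
    intro X
    have h := hbcm (fun i => if i ∈ X then (1:ℝ) else 0) (by
      intro i; by_cases h : i ∈ X <;> simp [h])
    have hx : (fun n => ∑ i, (if i ∈ X then (1:ℝ) else 0) * L i n)
        = fun n => ∑ i ∈ X, L i n := by
      funext n; simp [ite_mul, Finset.sum_ite_mem]
    have hy : (fun n => ∑ i, (if i ∈ X then (1:ℝ) else 0) * R i n)
        = fun n => ∑ i ∈ X, R i n := by
      funext n; simp [ite_mul, Finset.sum_ite_mem]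
    rwa [hx, hy] at h
  constructor
  · intro i
    have h := (key {i}).2
    simpa using h
  · intro X
    set s := Finset.univ.filter fun n : Fin m => ∀ i ∈ X, L i n = 1 with hs
    set sR := Finset.univ.filter fun n : Fin m => ∀ i ∈ X, R i n = 1 with hsR
    obtain ⟨t, ht_card, ht_sum⟩ := (key X).1 s
    -- sum over s of x equals s.card * X.card
    have hxs : ∑ n ∈ s, (∑ i ∈ X, L i n) = (s.card : ℝ) * X.card := by
      rw [Finset.sum_congr rfl (fun n hn => ?_)]
      · rw [Finset.sum_const, nsmul_eq_mul, mul_comm]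
      · simp only [hs, Finset.mem_filter] at hn
        rw [Finset.sum_congr rfl (fun i hi => hn.2 i hi), Finset.sum_const, nsmul_eq_mul, mul_one]
    have hyle : ∀ n, (∑ i ∈ X, R i n) ≤ (X.card : ℝ) := by
      intro n
      calc ∑ i ∈ X, R i n ≤ ∑ i ∈ X, (1:ℝ) := by
            refine Finset.sum_le_sum fun i _ => ?_
            rcases hR01 i n with h | h <;> simp [h]
        _ = X.card := by simp
    -- every n in t has y n = X.card
    have hforce : ∀ n ∈ t, (∑ i ∈ X, R i n) = (X.card : ℝ) := by
      by_contra hcon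
      push_neg at hcon
      obtain ⟨n0, hn0t, hn0⟩ := hcon
      have hlt : ∑ n ∈ t, (∑ i ∈ X, R i n) < ∑ n ∈ t, (X.card : ℝ) :=
        Finset.sum_lt_sum (fun n _ => hyle n) ⟨n0, hn0t, lt_of_le_of_ne (hyle n0) hn0⟩
      rw [Finset.sum_const, nsmul_eq_mul, ht_card] at hlt
      rw [hxs] at ht_sum
      linarith
    have hsub : t ⊆ sR := by
      intro n hn
      simp only [hsR, Finset.mem_filter, Finset.mem_univ, true_and]
      intro i hi
      have h1 : ∑ i ∈ X, R i n = ∑ i ∈ X, (1:ℝ) := by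
        rw [hforce n hn]; simp
      have := (Finset.sum_eq_sum_iff_of_le (fun i _ => by
        rcases hR01 i n with h | h <;> simp [h])).1 h1
      exact this i hi
    calc s.card = t.card := ht_card.symm
      _ ≤ sR.card := Finset.card_le_card hsub
end

section
/- Let k ≥ 3 and consider the star graph with vertex set {0, 1, ..., k, k+1}, external vertices {1, ..., k+1}, internal vertex 0, edges {i,0} of weight 1 for each i ∈ {1,...,k}, and edge {k+1, 0} of weight k−2 (all other pairs have weight 0). Then for every X ⊆ {1,...,k} with |X| = ℓ, the min-cut value satisfies S(X) = min(ℓ, 2k − ℓ − 2). -/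
/-- The total weight of the cut of edges determined by a vertex subset `W`:
the sum of `w a b` over pairs with `a ∈ W` and `b ∉ W`. -/
def cutWeight {V : Type} [Fintype V] [DecidableEq V] (w : V → V → ℝ) (W : Finset V) : ℝ :=
  ∑ a ∈ W, ∑ b ∈ Wᶜ, w a b

/-- The min-cut function of a finite weighted graph whose vertex set consists of the
`N+1` external vertices (`Sum.inl`) together with `I` internal vertices (`Sum.inr`):
the minimum, over all vertex subsets `W` whose intersection with the external
vertices is exactly `X`, of the cut weight of `W`. -/
def minCut {N I : ℕ} (w : (Fin (N + 1) ⊕ Fin I) → (Fin (N + 1) ⊕ Fin I) → ℝ)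
    (X : Finset (Fin (N + 1))) : ℝ :=
  (Finset.univ.filter fun W : Finset (Fin (N + 1) ⊕ Fin I) =>
      ∀ i : Fin (N + 1), Sum.inl i ∈ W ↔ i ∈ X).inf'
    ⟨X.image Sum.inl, by simp⟩ (cutWeight w)

/-- The weight function of the star graph with external vertices `1,…,k+1`
(encoded as `Sum.inl j`, the vertex with label `j+1`) and one internal vertex `0`
(encoded as `Sum.inr 0`): edges `{i, 0}` of weight `1` for `i ∈ {1,…,k}` and an
edge `{k+1, 0}` of weight `k - 2`; all other pairs have weight `0`. -/
def starWeight (k : ℕ) : (Fin (k + 1) ⊕ Fin 1) → (Fin (k + 1) ⊕ Fin 1) → ℝ :=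
  fun a b =>
    match a, b with
    | Sum.inl i, Sum.inr _ => if (i : ℕ) < k then 1 else (k : ℝ) - 2
    | Sum.inr _, Sum.inl i => if (i : ℕ) < k then 1 else (k : ℝ) - 2
    | _, _ => 0

/-- for `k ≥ 3`, the min-cut values of the star graph on any subset
`X ⊆ {1,…,k}` of the external vertices, with `|X| = ℓ`, equal `min(ℓ, 2k − ℓ − 2)`. -/
theorem stmt_9 (k : ℕ) (hk : 3 ≤ k)
    (X : Finset (Fin (k + 1))) (hX : ∀ j ∈ X, (j : ℕ) < k) :
    minCut (starWeight k) X =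
      min (X.card : ℝ) (2 * (k : ℝ) - (X.card : ℝ) - 2) := by
  classical
  set f : Fin (k + 1) → ℝ := fun i => if (i : ℕ) < k then 1 else (k : ℝ) - 2 with hf
  set W0 : Finset (Fin (k + 1) ⊕ Fin 1) := X.image Sum.inl with hW0
  set W1 : Finset (Fin (k + 1) ⊕ Fin 1) := insert (Sum.inr 0) W0 with hW1
  have hnotin : (Sum.inr 0 : Fin (k + 1) ⊕ Fin 1) ∉ W0 := by simp [hW0]
  have hwl : ∀ (i : Fin (k + 1)) (b : Fin (k + 1) ⊕ Fin 1),
      starWeight k (Sum.inl i) b = if b = Sum.inr 0 then f i else 0 := by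
    rintro i (j | u)
    · simp [starWeight]
    · have hu : u = 0 := Subsingleton.elim _ _
      subst hu
      simp [starWeight, f]
  have hc0 : cutWeight (starWeight k) W0 = (X.card : ℝ) := by
    rw [cutWeight, hW0, Finset.sum_image (by simp)]
    have h1 : ∀ i ∈ X, ∑ b ∈ (X.image Sum.inl)ᶜ, starWeight k (Sum.inl i) b = 1 := by
      intro i hi
      simp only [hwl]
      rw [Finset.sum_ite_eq']
      have : (Sum.inr 0 : Fin (k + 1) ⊕ Fin 1) ∈ (X.image Sum.inl)ᶜ := by simp
      rw [if_pos this]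
      simp [f, hX i hi]
    rw [Finset.sum_congr rfl h1]
    simp
  have hcompl : W1ᶜ = Xᶜ.image Sum.inl := by
    ext a
    rcases a with j | u
    · simp [hW1, hW0]
    · have hu : u = 0 := Subsingleton.elim _ _
      subst hu
      simp [hW1]
  have hsum_univ : ∑ j : Fin (k + 1), f j = (k : ℝ) + ((k : ℝ) - 2) := by
    rw [Fin.sum_univ_castSucc]
    have h1 : ∀ i ∈ (Finset.univ : Finset (Fin k)), f i.castSucc = 1 := by
      intro i _
      simp [f, i.isLt]
    rw [Finset.sum_congr rfl h1]
    simp [f, Fin.last]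
  have hsum_X : ∑ j ∈ X, f j = (X.card : ℝ) := by
    have h1 : ∀ j ∈ X, f j = 1 := fun j hj => by simp [f, hX j hj]
    rw [Finset.sum_congr rfl h1]
    simp
  have hc1 : cutWeight (starWeight k) W1 = 2 * (k : ℝ) - (X.card : ℝ) - 2 := by
    rw [cutWeight]
    rw [show W1 = insert (Sum.inr 0) W0 from hW1, Finset.sum_insert hnotin]
    have h2 : ∑ a ∈ W0, ∑ b ∈ (insert (Sum.inr (0 : Fin 1)) W0)ᶜ, starWeight k a b = 0 := by
      apply Finset.sum_eq_zero
      intro a ha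
      rw [hW0] at ha
      obtain ⟨i, hi, rfl⟩ := Finset.mem_image.mp ha
      apply Finset.sum_eq_zero
      intro b hb
      rw [hwl, if_neg]
      intro h
      subst h
      simp at hb
    rw [h2, add_zero]
    rw [show (insert (Sum.inr (0 : Fin 1)) W0)ᶜ = Xᶜ.image Sum.inl from hW1 ▸ hcompl]
    rw [Finset.sum_image (by simp)]
    have h3 : ∀ j ∈ Xᶜ, starWeight k (Sum.inr (0 : Fin 1)) (Sum.inl j) = f j := by
      intro j _
      simp [starWeight, f]
    rw [Finset.sum_congr rfl h3]
    have h4 : ∑ j ∈ Xᶜ, f j = ∑ j : Fin (k + 1), f j - ∑ j ∈ X, f j := by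
      rw [eq_sub_iff_add_eq, Finset.sum_compl_add_sum]
    rw [h4, hsum_univ, hsum_X]
    ring
  have hmem0 : ∀ i, Sum.inl i ∈ W0 ↔ i ∈ X := by
    intro i; simp [hW0]
  have hmem1 : ∀ i, Sum.inl i ∈ W1 ↔ i ∈ X := by
    intro i; simp [hW1, hW0]
  rw [minCut]
  apply le_antisymm
  · apply le_min
    · exact hc0 ▸ Finset.inf'_le _ (by simpa using hmem0)
    · exact hc1 ▸ Finset.inf'_le _ (by simpa using hmem1)
  · apply Finset.le_inf'
    intro W hW
    simp only [Finset.mem_filter, Finset.mem_univ, true_and] at hW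
    by_cases h0 : (Sum.inr 0 : Fin (k + 1) ⊕ Fin 1) ∈ W
    · have hWeq : W = W1 := by
        ext a
        rcases a with j | u
        · rw [hW j, hmem1 j]
        · have hu : u = 0 := Subsingleton.elim _ _
          subst hu
          simp [hW1, h0]
      rw [hWeq, hc1]
      exact min_le_right _ _
    · have hWeq : W = W0 := by
        ext a
        rcases a with j | u
        · rw [hW j, hmem0 j]
        · have hu : u = 0 := Subsingleton.elim _ _
          subst hu
          simp [hW0, h0]
      rw [hWeq, hc0]
      exact min_le_left _ _
end

section
/- Let (L,R) be a balanced pair of (0,1)-matrices with N+1 rows whose (N+1)-st row is zero in both L and R, which is a holographic entropy inequality: for every finite weighted graph with external vertices identified with {1,...,N+1}, the min-cut function S satisfies ∑_n S(X_n) ≥ ∑_n S(Y_n), where X_n (resp. Y_n) are the supports of the columns of L (resp. R). Then for every column index n of L whose column is nonzero, there exists a column index m of R such that the n-th column of L is componentwise ≤ the m-th column of R, i.e. X_n ⊆ Y_m. -/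
def wOf {N : ℕ} (f : Fin (N + 1) → ℝ) :
    (Fin (N + 1) ⊕ Fin 1) → (Fin (N + 1) ⊕ Fin 1) → ℝ
  | Sum.inl i, Sum.inr _ => f i
  | Sum.inr _, Sum.inl i => f i
  | _, _ => 0

lemma wOf_symm {N : ℕ} (f : Fin (N + 1) → ℝ) : ∀ a b, wOf f a b = wOf f b a := by
  rintro (a|a) (b|b) <;> rfl

lemma wOf_nonneg {N : ℕ} (f : Fin (N + 1) → ℝ) (hf : ∀ i, 0 ≤ f i) :
    ∀ a b, 0 ≤ wOf f a b := by
  rintro (a|a) (b|b)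
  · exact le_rfl
  · exact hf a
  · exact hf b
  · exact le_rfl

lemma cut_eq {N : ℕ} (f : Fin (N + 1) → ℝ) (Z : Finset (Fin (N + 1)))
    (W : Finset (Fin (N + 1) ⊕ Fin 1)) (hW : ∀ i, Sum.inl i ∈ W ↔ i ∈ Z) :
    cutWeight (wOf f) W =
      if Sum.inr 0 ∈ W then ∑ i ∈ Zᶜ, f i else ∑ i ∈ Z, f i := by
  by_cases h : (Sum.inr 0 : Fin (N+1) ⊕ Fin 1) ∈ W
  · rw [if_pos h]
    have hWc : Wᶜ = Zᶜ.image Sum.inl := by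
      ext a
      rcases a with i | j
      · simp [hW i]
      · have : j = 0 := Subsingleton.elim _ _
        subst this
        simp [h]
    unfold cutWeight
    rw [hWc]
    rw [Finset.sum_eq_single (Sum.inr 0)]
    · rw [Finset.sum_image (fun x _ y _ h => Sum.inl.inj h)]
      rfl
    · rintro (i | j) hb hne
      · apply Finset.sum_eq_zero
        rintro (x | y) hx
        · rfl
        · exact absurd (Finset.mem_image.mp hx) (by simp)
      · exact (hne (by rw [Subsingleton.elim j (0 : Fin 1)])).elim
    · intro hnot; exact absurd h hnot
  · rw [if_neg h]
    have hWe : W = Z.image Sum.inl := by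
      ext a
      rcases a with i | j
      · simp [hW i]
      · have : j = 0 := Subsingleton.elim _ _
        subst this
        simp [h]
    unfold cutWeight
    rw [hWe, Finset.sum_image (fun x _ y _ h => Sum.inl.inj h)]
    apply Finset.sum_congr rfl
    intro i _
    rw [Finset.sum_eq_single (Sum.inr 0)]
    · rfl
    · rintro (x | y) hx hne
      · rfl
      · exact (hne (by rw [Subsingleton.elim y (0 : Fin 1)])).elim
    · intro hnot
      exact absurd (Finset.mem_compl.mpr (hWe ▸ h)) hnot

lemma mem_minCut_filter₀ {N : ℕ} (Z : Finset (Fin (N + 1))) :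
    Z.image Sum.inl ∈ (Finset.univ.filter fun W : Finset (Fin (N + 1) ⊕ Fin 1) =>
      ∀ i, Sum.inl i ∈ W ↔ i ∈ Z) := by
  simp

lemma mem_minCut_filter₁ {N : ℕ} (Z : Finset (Fin (N + 1))) :
    Z.image Sum.inl ∪ {Sum.inr 0} ∈ (Finset.univ.filter
      fun W : Finset (Fin (N + 1) ⊕ Fin 1) => ∀ i, Sum.inl i ∈ W ↔ i ∈ Z) := by
  simp

lemma minCut_le_left {N : ℕ} (f : Fin (N + 1) → ℝ) (Z : Finset (Fin (N + 1))) :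
    minCut (wOf f) Z ≤ ∑ i ∈ Z, f i := by
  have h := Finset.inf'_le (cutWeight (wOf f)) (mem_minCut_filter₀ Z)
  rw [cut_eq f Z _ (fun i => by simp), if_neg (by simp)] at h
  exact h

lemma minCut_le_right {N : ℕ} (f : Fin (N + 1) → ℝ) (Z : Finset (Fin (N + 1))) :
    minCut (wOf f) Z ≤ ∑ i ∈ Zᶜ, f i := by
  have h := Finset.inf'_le (cutWeight (wOf f)) (mem_minCut_filter₁ Z)
  rw [cut_eq f Z _ (fun i => by simp), if_pos (by simp)] at h
  exact h

lemma le_minCut {N : ℕ} (f : Fin (N + 1) → ℝ) (Z : Finset (Fin (N + 1))) (r : ℝ)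
    (h1 : r ≤ ∑ i ∈ Z, f i) (h2 : r ≤ ∑ i ∈ Zᶜ, f i) :
    r ≤ minCut (wOf f) Z := by
  apply Finset.le_inf'
  intro W hW
  rw [cut_eq f Z W (fun i => by simpa using (Finset.mem_filter.mp hW).2 i)]
  split_ifs <;> assumption

/-- for a balanced holographic entropy inequality (purifier row
`N+1` zero in both matrices), every nonzero column of `L` is componentwise
dominated by some column of `R` (i.e. `Xₙ ⊆ Yₘ`). -/
theorem stmt_10 {N mL mR : ℕ}
    (L : Fin (N + 1) → Fin mL → Bool) (R : Fin (N + 1) → Fin mR → Bool)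
    (hbal : ∀ i : Fin (N + 1),
      (Finset.univ.filter fun n => L i n = true).card =
      (Finset.univ.filter fun n => R i n = true).card)
    (hLlast : ∀ n, L (Fin.last N) n = false)
    (hRlast : ∀ n, R (Fin.last N) n = false)
    (hHEI : ∀ (I : ℕ) (w : (Fin (N + 1) ⊕ Fin I) → (Fin (N + 1) ⊕ Fin I) → ℝ),
      (∀ a b, w a b = w b a) → (∀ a b, 0 ≤ w a b) →
      ∑ n' : Fin mR, minCut w (Finset.univ.filter fun i => R i n' = true) ≤
      ∑ n : Fin mL, minCut w (Finset.univ.filter fun i => L i n = true)) :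
    ∀ n : Fin mL, (∃ i, L i n = true) →
      ∃ m' : Fin mR, ∀ i : Fin (N + 1), L i n = true → R i m' = true := by
  intro n hn
  by_contra hcon
  push_neg at hcon
  -- hcon : ∀ m', ∃ i, L i n = true ∧ R i m' ≠ true
  set X : Finset (Fin (N + 1)) := Finset.univ.filter fun i => L i n = true with hX
  have hXne : X.Nonempty := hn.elim fun i hi => ⟨i, by simp [hX, hi]⟩
  have hXcard : 1 ≤ (X.card : ℝ) := by exact_mod_cast hXne.card_pos
  have hlastX : Fin.last N ∉ X := by simp [hX, hLlast]
  set c : ℝ := (X.card : ℝ) - 1 with hc_def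
  have hc : 0 ≤ c := by simp only [hc_def]; linarith
  set f : Fin (N + 1) → ℝ :=
    (fun i => if i ∈ X then 1 else if i = Fin.last N then c else 0) with hf_def
  have hf : ∀ i, 0 ≤ f i := by
    intro i
    simp only [hf_def]
    split_ifs
    · exact zero_le_one
    · exact hc
    · exact le_rfl
  -- sum of f over Z and Zᶜ when last ∉ Z
  have hsum1 : ∀ Z : Finset (Fin (N + 1)), Fin.last N ∉ Z →
      ∑ i ∈ Z, f i = ((Z ∩ X).card : ℝ) := by
    intro Z hZ
    have hcongr : ∀ i ∈ Z, f i = if i ∈ X then (1 : ℝ) else 0 := by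
      intro i hi
      have hne : i ≠ Fin.last N := fun h => hZ (h ▸ hi)
      simp only [hf_def, hne, if_false]
    rw [Finset.sum_congr rfl hcongr, Finset.sum_boole, Finset.filter_mem_eq_inter]
  have hsum2 : ∀ Z : Finset (Fin (N + 1)), Fin.last N ∉ Z →
      ∑ i ∈ Zᶜ, f i = ((Zᶜ ∩ X).card : ℝ) + c := by
    intro Z hZ
    have hmem : Fin.last N ∈ Zᶜ := Finset.mem_compl.mpr hZ
    rw [← Finset.add_sum_erase _ f hmem]
    have hflast : f (Fin.last N) = c := by simp [hf_def, hlastX]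
    have hcongr : ∀ i ∈ Zᶜ.erase (Fin.last N), f i = if i ∈ X then (1 : ℝ) else 0 := by
      intro i hi
      have hne : i ≠ Fin.last N := (Finset.mem_erase.mp hi).1
      simp only [hf_def, hne, if_false]
    rw [hflast, Finset.sum_congr rfl hcongr, Finset.sum_boole, Finset.filter_mem_eq_inter]
    have : Zᶜ.erase (Fin.last N) ∩ X = Zᶜ ∩ X := by
      ext i
      simp only [Finset.mem_inter, Finset.mem_erase]
      constructor
      · rintro ⟨⟨_, h1⟩, h2⟩; exact ⟨h1, h2⟩
      · rintro ⟨h1, h2⟩; exact ⟨⟨fun e => hlastX (e ▸ h2), h1⟩, h2⟩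
    rw [this, add_comm]
  have hlastL : ∀ k : Fin mL,
      Fin.last N ∉ (Finset.univ.filter fun i => L i k = true) := by
    intro k; simp [hLlast]
  have hlastR : ∀ m : Fin mR,
      Fin.last N ∉ (Finset.univ.filter fun i => R i m = true) := by
    intro m; simp [hRlast]
  -- upper bound for L columns
  have hub : ∀ k : Fin mL,
      minCut (wOf f) (Finset.univ.filter fun i => L i k = true) ≤
        ((((Finset.univ.filter fun i => L i k = true) : Finset (Fin (N+1))) ∩ X).card : ℝ)
          - (if k = n then 1 else 0) := by
    intro k
    by_cases hk : k = n
    · subst hk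
      have h := minCut_le_right f X
      rw [hsum2 X hlastX] at h
      rw [if_pos rfl]
      have hXX : (X ∩ X) = X := Finset.inter_self X
      have hcompl : (Xᶜ ∩ X) = ∅ := by
        ext i; simp
      calc minCut (wOf f) X ≤ ((Xᶜ ∩ X).card : ℝ) + c := h
        _ = (X.card : ℝ) - 1 := by rw [hcompl, hc_def]; simp
        _ = ((X ∩ X).card : ℝ) - 1 := by rw [hXX]
    · rw [if_neg hk, sub_zero]
      have h := minCut_le_left f (Finset.univ.filter fun i => L i k = true)
      rwa [hsum1 _ (hlastL k)] at h
  -- lower bound for R columns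
  have hlb : ∀ m : Fin mR,
      ((((Finset.univ.filter fun i => R i m = true) : Finset (Fin (N+1))) ∩ X).card : ℝ) ≤
        minCut (wOf f) (Finset.univ.filter fun i => R i m = true) := by
    intro m
    set Z : Finset (Fin (N + 1)) := Finset.univ.filter fun i => R i m = true with hZdef
    apply le_minCut
    · rw [hsum1 Z (hlastR m)]
    · rw [hsum2 Z (hlastR m)]
      obtain ⟨i, hiL, hiR⟩ := hcon m
      have hiX : i ∈ X := by simp [hX, hiL]
      have hiZc : i ∈ Zᶜ := by simp [hZdef, hiR]
      have h1 : 1 ≤ ((Zᶜ ∩ X).card : ℝ) := by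
        have : (Zᶜ ∩ X).Nonempty := ⟨i, Finset.mem_inter.mpr ⟨hiZc, hiX⟩⟩
        exact_mod_cast this.card_pos
      have h2 : ((Z ∩ X).card : ℝ) ≤ (X.card : ℝ) := by
        exact_mod_cast Finset.card_le_card (Finset.inter_subset_right)
      simp only [hc_def]
      linarith
  -- balance: the two total intersection counts agree
  have hbalX : ∑ m : Fin mR,
        (((Finset.univ.filter fun i => R i m = true) : Finset (Fin (N+1))) ∩ X).card =
      ∑ k : Fin mL,
        (((Finset.univ.filter fun i => L i k = true) : Finset (Fin (N+1))) ∩ X).card := by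
    have hL : ∀ k : Fin mL,
        (((Finset.univ.filter fun i => L i k = true) : Finset (Fin (N+1))) ∩ X).card =
          ∑ i ∈ X, if L i k = true then 1 else 0 := by
      intro k
      rw [← Finset.card_filter]
      congr 1
      ext i
      simp only [Finset.mem_inter, Finset.mem_filter, Finset.mem_univ, true_and, and_comm]
    have hR : ∀ m : Fin mR,
        (((Finset.univ.filter fun i => R i m = true) : Finset (Fin (N+1))) ∩ X).card =
          ∑ i ∈ X, if R i m = true then 1 else 0 := by
      intro m
      rw [← Finset.card_filter]
      congr 1
      ext i
      simp only [Finset.mem_inter, Finset.mem_filter, Finset.mem_univ, true_and, and_comm]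
    simp only [hL, hR]
    rw [Finset.sum_comm, Finset.sum_comm (s := Finset.univ)]
    apply Finset.sum_congr rfl
    intro i _
    rw [Finset.sum_boole, Finset.sum_boole]
    exact_mod_cast (hbal i).symm
  -- combine with hHEI
  have key := hHEI 1 (wOf f) (wOf_symm f) (wOf_nonneg f hf)
  have hRsum : ∑ m : Fin mR,
        ((((Finset.univ.filter fun i => R i m = true) : Finset (Fin (N+1))) ∩ X).card : ℝ) ≤
      ∑ m : Fin mR, minCut (wOf f) (Finset.univ.filter fun i => R i m = true) :=
    Finset.sum_le_sum fun m _ => hlb m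
  have hLsum : ∑ k : Fin mL, minCut (wOf f) (Finset.univ.filter fun i => L i k = true) ≤
      (∑ k : Fin mL,
        ((((Finset.univ.filter fun i => L i k = true) : Finset (Fin (N+1))) ∩ X).card : ℝ)) - 1 := by
    have h := Finset.sum_le_sum fun k (_ : k ∈ Finset.univ) => hub k
    rw [Finset.sum_sub_distrib] at h
    have : ∑ k : Fin mL, (if k = n then (1:ℝ) else 0) = 1 := by
      rw [Finset.sum_ite_eq' Finset.univ n (fun _ => (1:ℝ))]
      simp
    rwa [this] at h
  have hcast : ∑ m : Fin mR,
        ((((Finset.univ.filter fun i => R i m = true) : Finset (Fin (N+1))) ∩ X).card : ℝ) =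
      ∑ k : Fin mL,
        ((((Finset.univ.filter fun i => L i k = true) : Finset (Fin (N+1))) ∩ X).card : ℝ) := by
    exact_mod_cast congrArg (Nat.cast : ℕ → ℝ) hbalX
  linarith
end

section
/- Let A be the 6×3 (0,1)-matrix with rows (1,1,0),(1,1,0),(1,0,1),(1,0,1),(0,1,1),(0,1,1), and let B be the 6×6 (0,1)-matrix with rows (1,1,0,0,1,0),(1,1,1,0,0,1),(1,1,1,1,0,0),(1,0,1,0,1,0),(1,1,0,1,0,1),(1,0,0,1,0,1). Let L be the 8×12 matrix whose first 6 rows are the horizontal concatenation [A | I₆ | a₂ | a₃ | a₅] (I₆ the 6×6 identity, a_i the 6-entry column with a 1 in position i and 0s elsewhere), whose 7th row is all 1s and whose 8th row is all 0s; let R be the 8×12 matrix whose first 6 rows are [B | O] (O the 6×6 zero matrix), whose 7th row is all 1s and whose 8th row is all 0s. Then L is binary-combinations majorized by R: for every v ∈ {0,1}^8, vL is majorized by vR. -/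
def L13 : Fin 8 → Fin 12 → ℝ :=
  ![![1, 1, 0, 1, 0, 0, 0, 0, 0, 0, 0, 0],
     ![1, 1, 0, 0, 1, 0, 0, 0, 0, 1, 0, 0],
     ![1, 0, 1, 0, 0, 1, 0, 0, 0, 0, 1, 0],
     ![1, 0, 1, 0, 0, 0, 1, 0, 0, 0, 0, 0],
     ![0, 1, 1, 0, 0, 0, 0, 1, 0, 0, 0, 1],
     ![0, 1, 1, 0, 0, 0, 0, 0, 1, 0, 0, 0],
     ![1, 1, 1, 1, 1, 1, 1, 1, 1, 1, 1, 1],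
     ![0, 0, 0, 0, 0, 0, 0, 0, 0, 0, 0, 0]]

def R13 : Fin 8 → Fin 12 → ℝ :=
  ![![1, 1, 0, 0, 1, 0, 0, 0, 0, 0, 0, 0],
     ![1, 1, 1, 0, 0, 1, 0, 0, 0, 0, 0, 0],
     ![1, 1, 1, 1, 0, 0, 0, 0, 0, 0, 0, 0],
     ![1, 0, 1, 0, 1, 0, 0, 0, 0, 0, 0, 0],
     ![1, 1, 0, 1, 0, 1, 0, 0, 0, 0, 0, 0],
     ![1, 0, 0, 1, 0, 1, 0, 0, 0, 0, 0, 0],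
     ![1, 1, 1, 1, 1, 1, 1, 1, 1, 1, 1, 1],
     ![0, 0, 0, 0, 0, 0, 0, 0, 0, 0, 0, 0]]

open List in
theorem List.Subperm.sum_le_sum_take {α : Type*} [AddCommMonoid α] [LinearOrder α]
    [IsOrderedAddMonoid α] {u l : List α} (hu : u <+~ l) (hl : l.Pairwise (· ≥ ·)) :
    u.sum ≤ (l.take u.length).sum := by
  induction l generalizing u with
  | nil => simp [subperm_nil.mp hu]
  | cons a l ih =>
    rw [pairwise_cons] at hl
    have hu_erase : u.erase a <+~ l := by simpa using hu.erase a
    by_cases ha : a ∈ u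
    · have hperm := perm_cons_erase ha
      calc u.sum = a + (u.erase a).sum := by simp [hperm.sum_eq]
        _ ≤ a + (l.take (u.erase a).length).sum := add_le_add_right (ih hu_erase hl.2) a
        _ = ((a :: l).take u.length).sum := by simp [hperm.length_eq]
    · rw [erase_of_not_mem ha] at hu_erase
      cases u with
      | nil => simp
      | cons b u =>
        have hba : b ≤ a := hl.1 b (hu_erase.subset mem_cons_self)
        have hu' : u <+~ l := (sublist_cons_self b u).subperm.trans hu_erase
        simpa using add_le_add hba (ih hu' hl.2)

section TopSum

open List

variable {d : ℕ}

def sortDesc (x : Fin d → ℕ) : List ℕ := (ofFn x).insertionSort (· ≥ ·)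

def topSum (x : Fin d → ℕ) (k : ℕ) : ℕ := ((sortDesc x).take k).sum

lemma sortDesc_perm (x : Fin d → ℕ) : sortDesc x ~ (finRange d).map x := by
  rw [← ofFn_eq_map]
  exact perm_insertionSort _ _

lemma sum_le_topSum (x : Fin d → ℕ) (s : Finset (Fin d)) : ∑ i ∈ s, x i ≤ topSum x s.card := by
  obtain ⟨w, hw, hws⟩ : s.toList <+~ finRange d :=
    subperm_of_subset s.nodup_toList fun i _ => mem_finRange i
  have hsub : s.toList.map x <+~ sortDesc x :=
    Subperm.trans ⟨w.map x, hw.map x, hws.map x⟩ (sortDesc_perm x).symm.subperm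
  simpa [topSum] using hsub.sum_le_sum_take (pairwise_insertionSort _ _)

lemma exists_card_eq_sum_eq_topSum (y : Fin d → ℕ) {k : ℕ} (hk : k ≤ d) :
    ∃ t : Finset (Fin d), t.card = k ∧ ∑ i ∈ t, y i = topSum y k := by
  obtain ⟨w, hw, hws⟩ : (sortDesc y).take k <+~ (finRange d).map y :=
    (take_sublist k _).subperm.trans (sortDesc_perm y).subperm
  obtain ⟨w', hw', rfl⟩ := sublist_map_iff.mp hws
  have hnodup : w'.Nodup := hw'.nodup (nodup_finRange d)
  refine ⟨w'.toFinset, ?_, ?_⟩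
  · rw [toFinset_card_of_nodup hnodup, ← length_map (f := y), hw.length_eq]
    simp [sortDesc, hk]
  · rw [sum_toFinset _ hnodup, hw.sum_eq, topSum]

theorem majorizedBy_cast_of_topSum_le {x y : Fin d → ℕ} (h : ∀ k ≤ d, topSum x k ≤ topSum y k)
    (hsum : ∑ i, x i = ∑ i, y i) : MajorizedBy (fun i => (x i : ℝ)) (fun i => (y i : ℝ)) := by
  refine ⟨fun s => ?_, by beta_reduce; exact_mod_cast hsum⟩
  have hs : s.card ≤ d := s.card_le_univ.trans_eq (Fintype.card_fin d)
  obtain ⟨t, hcard, ht⟩ := exists_card_eq_sum_eq_topSum y hs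
  refine ⟨t, hcard, ?_⟩
  beta_reduce
  exact_mod_cast (sum_le_topSum x s).trans ((h _ hs).trans ht.ge)

end TopSum

section Matrices13

open Matrix

def natL13 : Matrix (Fin 8) (Fin 12) ℕ :=
  !![1, 1, 0, 1, 0, 0, 0, 0, 0, 0, 0, 0;
     1, 1, 0, 0, 1, 0, 0, 0, 0, 1, 0, 0;
     1, 0, 1, 0, 0, 1, 0, 0, 0, 0, 1, 0;
     1, 0, 1, 0, 0, 0, 1, 0, 0, 0, 0, 0;
     0, 1, 1, 0, 0, 0, 0, 1, 0, 0, 0, 1;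
     0, 1, 1, 0, 0, 0, 0, 0, 1, 0, 0, 0;
     1, 1, 1, 1, 1, 1, 1, 1, 1, 1, 1, 1;
     0, 0, 0, 0, 0, 0, 0, 0, 0, 0, 0, 0]

def natR13 : Matrix (Fin 8) (Fin 12) ℕ :=
  !![1, 1, 0, 0, 1, 0, 0, 0, 0, 0, 0, 0;
     1, 1, 1, 0, 0, 1, 0, 0, 0, 0, 0, 0;
     1, 1, 1, 1, 0, 0, 0, 0, 0, 0, 0, 0;
     1, 0, 1, 0, 1, 0, 0, 0, 0, 0, 0, 0;
     1, 1, 0, 1, 0, 1, 0, 0, 0, 0, 0, 0;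
     1, 0, 0, 1, 0, 1, 0, 0, 0, 0, 0, 0;
     1, 1, 1, 1, 1, 1, 1, 1, 1, 1, 1, 1;
     0, 0, 0, 0, 0, 0, 0, 0, 0, 0, 0, 0]

lemma L13_eq_cast : L13 = natL13.map Nat.cast := by
  ext i n
  fin_cases i <;> fin_cases n <;> simp [L13, natL13]

lemma R13_eq_cast : R13 = natR13.map Nat.cast := by
  ext i n
  fin_cases i <;> fin_cases n <;> simp [R13, natR13]

lemma forall_bool_topSum_natL13_le_natR13 : ∀ b : Fin 8 → Bool,
    (∀ k ≤ 12, topSum ((fun i => (b i).toNat) ᵥ* natL13) k ≤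
      topSum ((fun i => (b i).toNat) ᵥ* natR13) k) ∧
    ∑ n, ((fun i => (b i).toNat) ᵥ* natL13) n = ∑ n, ((fun i => (b i).toNat) ᵥ* natR13) n := by
  decide +kernel

end Matrices13

/-- `L13` is binary-combinations majorized by `R13`. -/
theorem stmt_13 :
    ∀ v : Fin 8 → ℝ, (∀ i, v i = 0 ∨ v i = 1) →
      MajorizedBy (fun n => ∑ i, v i * L13 i n) (fun n => ∑ i, v i * R13 i n) := by
  intro v hv
  obtain ⟨b, rfl⟩ : ∃ b : Fin 8 → Bool, v = fun i => ((b i).toNat : ℝ) :=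
    ⟨fun i => decide (v i = 1), funext fun i => by rcases hv i with h | h <;> simp [h]⟩
  obtain ⟨hle, hsum⟩ := forall_bool_topSum_natL13_le_natR13 b
  simpa [L13_eq_cast, R13_eq_cast, Matrix.vecMul, dotProduct] using
    majorizedBy_cast_of_topSum_le hle hsum
end

section
/- Let L be the 8×4 (0,1)-matrix with rows (1,1,1,1),(1,1,0,0),(1,1,0,0),(1,0,1,0),(1,0,1,0),(0,1,1,0),(0,1,1,0),(0,0,0,0) and R the 8×4 (0,1)-matrix with rows (1,1,1,1),(1,1,0,0),(1,1,0,0),(1,0,1,0),(1,0,1,0),(1,0,0,1),(1,0,0,1),(0,0,0,0). Then (L,R) obeys region dominance: it is balanced and for every X ⊆ {1,...,8} the number of columns of L having a 1 in every row i ∈ X is at most the number of such columns of R; but L is not binary-combinations majorized by R: for v = (0,1,0,1,0,1,0,0) one has vL = (2,2,2,0) and vR = (3,1,1,1), and vL is not majorized by vR. -/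
def L15 : Fin 8 → Fin 4 → ℝ :=
  ![![1, 1, 1, 1],
     ![1, 1, 0, 0],
     ![1, 1, 0, 0],
     ![1, 0, 1, 0],
     ![1, 0, 1, 0],
     ![0, 1, 1, 0],
     ![0, 1, 1, 0],
     ![0, 0, 0, 0]]

def R15 : Fin 8 → Fin 4 → ℝ :=
  ![![1, 1, 1, 1],
     ![1, 1, 0, 0],
     ![1, 1, 0, 0],
     ![1, 0, 1, 0],
     ![1, 0, 1, 0],
     ![1, 0, 0, 1],
     ![1, 0, 0, 1],
     ![0, 0, 0, 0]]

namespace Matrix01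

variable {m d : ℕ}

def ofBool (B : Fin m → Fin d → Bool) : Fin m → Fin d → ℝ :=
  fun i n => if B i n then 1 else 0

theorem ofBool_eq_one_iff (B : Fin m → Fin d → Bool) (i : Fin m) (n : Fin d) :
    ofBool B i n = 1 ↔ B i n = true := by
  by_cases h : B i n <;> simp [ofBool, h]

theorem sum_ofBool (B : Fin m → Fin d → Bool) (i : Fin m) :
    ∑ n, ofBool B i n = (Finset.univ.filter fun n => B i n = true).card := by
  simp [ofBool]

theorem filter_forall_ofBool_eq_one (B : Fin m → Fin d → Bool) (X : Finset (Fin m)) :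
    (Finset.univ.filter fun n => ∀ i ∈ X, ofBool B i n = 1) =
      Finset.univ.filter fun n => ∀ i ∈ X, B i n = true := by
  simp only [ofBool_eq_one_iff]

end Matrix01

open Matrix01

-- Equality in `ℝ` is not decidable, so the finite checks run on these Boolean copies.
def L15b : Fin 8 → Fin 4 → Bool :=
  ![![true, true, true, true],
     ![true, true, false, false],
     ![true, true, false, false],
     ![true, false, true, false],
     ![true, false, true, false],
     ![false, true, true, false],
     ![false, true, true, false],
     ![false, false, false, false]]

def R15b : Fin 8 → Fin 4 → Bool :=
  ![![true, true, true, true],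
     ![true, true, false, false],
     ![true, true, false, false],
     ![true, false, true, false],
     ![true, false, true, false],
     ![true, false, false, true],
     ![true, false, false, true],
     ![false, false, false, false]]

theorem L15_eq_ofBool : L15 = ofBool L15b := by
  ext i n; fin_cases i <;> fin_cases n <;> simp [L15, L15b, ofBool]

theorem R15_eq_ofBool : R15 = ofBool R15b := by
  ext i n; fin_cases i <;> fin_cases n <;> simp [R15, R15b, ofBool]

theorem L15_balanced_R15 (i : Fin 8) : ∑ n, L15 i n = ∑ n, R15 i n := by
  rw [L15_eq_ofBool, R15_eq_ofBool, sum_ofBool, sum_ofBool]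
  norm_cast
  revert i
  decide

set_option maxRecDepth 10000 in
theorem L15_regionDominance_R15 (X : Finset (Fin 8)) :
    (Finset.univ.filter fun n : Fin 4 => ∀ i ∈ X, L15 i n = 1).card ≤
      (Finset.univ.filter fun n : Fin 4 => ∀ i ∈ X, R15 i n = 1).card := by
  rw [L15_eq_ofBool, R15_eq_ofBool, filter_forall_ofBool_eq_one, filter_forall_ofBool_eq_one]
  revert X
  decide

theorem vecMul_L15 :
    (fun n => ∑ i, (![0, 1, 0, 1, 0, 1, 0, 0] : Fin 8 → ℝ) i * L15 i n) =
      (![2, 2, 2, 0] : Fin 4 → ℝ) := by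
  funext n; fin_cases n <;> norm_num [L15, Fin.sum_univ_succ]

theorem vecMul_R15 :
    (fun n => ∑ i, (![0, 1, 0, 1, 0, 1, 0, 0] : Fin 8 → ℝ) i * R15 i n) =
      (![3, 1, 1, 1] : Fin 4 → ℝ) := by
  funext n; fin_cases n <;> norm_num [R15, Fin.sum_univ_succ]

-- The three largest entries of `(2,2,2,0)` sum to 6, those of `(3,1,1,1)` only to 5.
theorem not_majorizedBy_222_3111 :
    ¬ MajorizedBy (![2, 2, 2, 0] : Fin 4 → ℝ) ![3, 1, 1, 1] := by
  rintro ⟨hpartial, -⟩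
  obtain ⟨t, ht, hle⟩ := hpartial {0, 1, 2}
  fin_cases t <;> simp_all <;> norm_num at hle

/-- `(L15, R15)` is balanced and obeys region dominance, but `L15`
is not binary-combinations majorized by `R15`: for `v = (0,1,0,1,0,1,0,0)` one has
`vL15 = (2,2,2,0)` and `vR15 = (3,1,1,1)`, and `vL15` is not majorized by `vR15`. -/
theorem stmt_15 :
    (∀ i : Fin 8, ∑ n, L15 i n = ∑ n, R15 i n) ∧
    (∀ X : Finset (Fin 8),
      (Finset.univ.filter fun n : Fin 4 => ∀ i ∈ X, L15 i n = 1).card ≤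
      (Finset.univ.filter fun n : Fin 4 => ∀ i ∈ X, R15 i n = 1).card) ∧
    (fun n => ∑ i, (![0, 1, 0, 1, 0, 1, 0, 0] : Fin 8 → ℝ) i * L15 i n) =
      (![2, 2, 2, 0] : Fin 4 → ℝ) ∧
    (fun n => ∑ i, (![0, 1, 0, 1, 0, 1, 0, 0] : Fin 8 → ℝ) i * R15 i n) =
      (![3, 1, 1, 1] : Fin 4 → ℝ) ∧
    ¬ MajorizedBy (fun n => ∑ i, (![0, 1, 0, 1, 0, 1, 0, 0] : Fin 8 → ℝ) i * L15 i n)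
        (fun n => ∑ i, (![0, 1, 0, 1, 0, 1, 0, 0] : Fin 8 → ℝ) i * R15 i n) ∧
    ¬ (∀ v : Fin 8 → ℝ, (∀ i, v i = 0 ∨ v i = 1) →
        MajorizedBy (fun n => ∑ i, v i * L15 i n) (fun n => ∑ i, v i * R15 i n)) := by
  have hNM := not_majorizedBy_222_3111
  rw [← vecMul_L15, ← vecMul_R15] at hNM
  refine ⟨L15_balanced_R15, L15_regionDominance_R15, vecMul_L15, vecMul_R15, hNM, ?_⟩
  intro h
  exact hNM (h _ fun i => by fin_cases i <;> simp)
end
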